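/- arXiv:1609.09602 — 5 statements merged into one kernel-verified Lean document; each statement's English description precedes it below -/
import Mathlib

section
/- Let f, g ∈ 𝔽₂[x₁,…,x_n] be pseudo-monomials. Then either (f g)_R = 0, or (f g)_R is a pseudo-monomial that is a polynomial multiple of both f and g. -/
open MvPolynomial

/-- The characteristic polynomial `ρ_v = ∏ i, (1 - v_i - x_i)` of a word `v ∈ {0,1}ⁿ = 𝔽₂ⁿ`. -/
noncomputable def rho (n : ℕ) (v : Fin n → ZMod 2) : MvPolynomial (Fin n) (ZMod 2) :=
  ∏ i, (1 - C (v i) - X i)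

/-- The neural ideal `J_C = ⟨ρ_v : v ∉ C⟩` of a neural code `C ⊆ {0,1}ⁿ`. -/
noncomputable def neuralIdeal (n : ℕ) (Co : Set (Fin n → ZMod 2)) :
    Ideal (MvPolynomial (Fin n) (ZMod 2)) :=
  Ideal.span { p | ∃ v, v ∉ Co ∧ p = rho n v }

/-- A pseudo-monomial: `∏_{i∈σ} x_i ∏_{j∈τ} (1 - x_j)` with `σ, τ` disjoint. -/
def IsPseudoMonomial (n : ℕ) (f : MvPolynomial (Fin n) (ZMod 2)) : Prop :=
  ∃ σ τ : Finset (Fin n), Disjoint σ τ ∧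
    f = (∏ i ∈ σ, X i) * ∏ j ∈ τ, (1 - X j)

/-- `f` is a minimal pseudo-monomial of the ideal `J`. -/
def IsMinimalPM (n : ℕ) (J : Ideal (MvPolynomial (Fin n) (ZMod 2)))
    (f : MvPolynomial (Fin n) (ZMod 2)) : Prop :=
  f ∈ J ∧ IsPseudoMonomial n f ∧
    ¬ ∃ g, IsPseudoMonomial n g ∧ g ∈ J ∧ g.totalDegree < f.totalDegree ∧
      ∃ h, f = g * h

/-- The canonical form `CF(J)`: the set of all minimal pseudo-monomials of `J`. -/
def CF (n : ℕ) (J : Ideal (MvPolynomial (Fin n) (ZMod 2))) :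
    Set (MvPolynomial (Fin n) (ZMod 2)) :=
  { f | IsMinimalPM n J f }

/-- An ideal is a pseudo-monomial ideal if it is generated by finitely many pseudo-monomials. -/
def IsPseudoMonomialIdeal (n : ℕ) (J : Ideal (MvPolynomial (Fin n) (ZMod 2))) : Prop :=
  ∃ S : Finset (MvPolynomial (Fin n) (ZMod 2)),
    (∀ f ∈ S, IsPseudoMonomial n f) ∧ J = Ideal.span (S : Set (MvPolynomial (Fin n) (ZMod 2)))

/-- A polynomial is square-free if every variable occurs with exponent at most 1
in every monomial of its support. -/
def IsSquareFreePoly (n : ℕ) (f : MvPolynomial (Fin n) (ZMod 2)) : Prop :=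
  ∀ m ∈ f.support, ∀ i, m i ≤ 1

/-- The Boolean ideal `B = ⟨x_i (1 - x_i) : 1 ≤ i ≤ n⟩`. -/
noncomputable def boolIdeal (n : ℕ) : Ideal (MvPolynomial (Fin n) (ZMod 2)) :=
  Ideal.span { p | ∃ i : Fin n, p = X i * (1 - X i) }

/-- The square-free representative `h_R` of `h` modulo the Boolean ideal:
replace every exponent by its truncation at 1. -/
noncomputable def sqReduce (n : ℕ) (h : MvPolynomial (Fin n) (ZMod 2)) :
    MvPolynomial (Fin n) (ZMod 2) :=
  ∑ m ∈ h.support,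
    monomial (Finsupp.mapRange (fun e => min e 1) (by simp) m) (coeff m h)

/-- The set of reduced products `P(C,D) = {(f g)_R : f ∈ CF(J_C), g ∈ CF(J_D)}`. -/
def reducedProducts (n : ℕ) (Co D : Set (Fin n → ZMod 2)) :
    Set (MvPolynomial (Fin n) (ZMod 2)) :=
  { p | ∃ f ∈ CF n (neuralIdeal n Co), ∃ g ∈ CF n (neuralIdeal n D), p = sqReduce n (f * g) }

/-- The set of minimal reduced products `MP(C,D)`. -/
def minReducedProducts (n : ℕ) (Co D : Set (Fin n → ZMod 2)) :
    Set (MvPolynomial (Fin n) (ZMod 2)) :=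
  { h | h ∈ reducedProducts n Co D ∧ h ≠ 0 ∧
    ¬ ∃ f ∈ reducedProducts n Co D, ∃ g : MvPolynomial (Fin n) (ZMod 2),
      1 ≤ g.totalDegree ∧ h = f * g }

/-- The code `C(U)` of a cover `U = {U_1, …, U_n}` of a topological space `X`. -/
def codeOfCover {X : Type*} [TopologicalSpace X] (n : ℕ) (U : Fin n → Set X) :
    Set (Fin n → ZMod 2) :=
  { v | ((⋂ i ∈ { i : Fin n | v i = 1 }, U i) \ ⋃ j ∈ { j : Fin n | v j = 0 }, U j).Nonempty }

/-!
Modulo the Boolean ideal `B` every `x_i` becomes an idempotent with `x_i (1 - x_i) = 0`, so in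
`𝔽₂[x]/B` the product of the pseudo-monomials on `(σ₁, τ₁)` and `(σ₂, τ₂)` is the pseudo-monomial
on `(σ₁ ∪ σ₂, τ₁ ∪ τ₂)`, which vanishes as soon as the two unions meet. Exponent truncation kills
`B`, because it is additive and `(p q)_R` only depends on `q_R`, and it fixes square-free
polynomials, such as a pseudo-monomial on disjoint index sets.
-/

section SqReduce

variable {n : ℕ}

theorem sqReduce_eq_mapDomain (h : MvPolynomial (Fin n) (ZMod 2)) :
    sqReduce n h =
      AddMonoidAlgebra.mapDomain (Finsupp.mapRange (fun e => min e 1) (by simp)) h := by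
  rw [AddMonoidAlgebra.mapDomain, Finsupp.mapDomain, Finsupp.sum, AddMonoidAlgebra.ofCoeff_sum,
    sqReduce]
  exact Finset.sum_congr rfl fun m _ => by rw [← single_eq_monomial]; rfl

@[simp]
theorem sqReduce_zero : sqReduce n 0 = 0 := by
  simp [sqReduce]

theorem sqReduce_add (p q : MvPolynomial (Fin n) (ZMod 2)) :
    sqReduce n (p + q) = sqReduce n p + sqReduce n q := by
  simp only [sqReduce_eq_mapDomain]
  exact AddMonoidAlgebra.mapDomain_add _ _ _

theorem sqReduce_monomial (m : Fin n →₀ ℕ) (c : ZMod 2) :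
    sqReduce n (monomial m c) = monomial (Finsupp.mapRange (fun e => min e 1) (by simp) m) c := by
  rw [sqReduce_eq_mapDomain, ← single_eq_monomial, AddMonoidAlgebra.mapDomain_single,
    single_eq_monomial]

theorem sqReduce_of_isSquareFreePoly {p : MvPolynomial (Fin n) (ZMod 2)}
    (hp : IsSquareFreePoly n p) : sqReduce n p = p := by
  conv_rhs => rw [← support_sum_monomial_coeff p]
  refine Finset.sum_congr rfl fun m hm => ?_
  congr 2
  ext i
  simp [hp m hm i]

theorem sqReduce_mul_sqReduce (p q : MvPolynomial (Fin n) (ZMod 2)) :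
    sqReduce n (p * sqReduce n q) = sqReduce n (p * q) := by
  induction q using MvPolynomial.induction_on' with
  | monomial b d =>
    induction p using MvPolynomial.induction_on' with
    | monomial a c =>
      rw [sqReduce_monomial, monomial_mul, monomial_mul, sqReduce_monomial, sqReduce_monomial]
      congr 2
      ext i
      simp only [Finsupp.mapRange_apply, Finsupp.add_apply]
      omega
    | add p p' hp hp' => rw [add_mul, add_mul, sqReduce_add, sqReduce_add, hp, hp']
  | add q q' hq hq' => rw [sqReduce_add, mul_add, mul_add, sqReduce_add, sqReduce_add, hq, hq']

theorem sqReduce_X_mul_one_sub_X (i : Fin n) : sqReduce n (X i * (1 - X i)) = 0 := by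
  have hX : sqReduce n (X i) = X i := by
    rw [X, sqReduce_monomial, Finsupp.mapRange_single, min_self]
  have hXX : sqReduce n (X i * X i) = X i := by
    rw [X, monomial_mul, ← Finsupp.single_add, sqReduce_monomial, Finsupp.mapRange_single, mul_one]
    rfl
  rw [mul_one_sub, CharTwo.sub_eq_add, sqReduce_add, hX, hXX, CharTwo.add_self_eq_zero]

theorem sqReduce_eq_zero_of_mem_boolIdeal {p : MvPolynomial (Fin n) (ZMod 2)}
    (hp : p ∈ boolIdeal n) : sqReduce n p = 0 := by
  induction hp using Submodule.span_induction with
  | mem x hx =>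
    obtain ⟨i, rfl⟩ := hx
    exact sqReduce_X_mul_one_sub_X i
  | zero => exact sqReduce_zero
  | add x y _ _ hx hy => rw [sqReduce_add, hx, hy, add_zero]
  | smul a x _ hx => rw [smul_eq_mul, ← sqReduce_mul_sqReduce, hx, mul_zero, sqReduce_zero]

theorem sqReduce_eq_of_mk_eq {p q : MvPolynomial (Fin n) (ZMod 2)}
    (h : Ideal.Quotient.mk (boolIdeal n) p = Ideal.Quotient.mk (boolIdeal n) q) :
    sqReduce n p = sqReduce n q := by
  rw [← sub_add_cancel p q, sqReduce_add,
    sqReduce_eq_zero_of_mem_boolIdeal (Ideal.Quotient.eq.mp h), zero_add]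

theorem isIdempotentElem_mk_X (i : Fin n) :
    IsIdempotentElem (Ideal.Quotient.mk (boolIdeal n) (X i)) := by
  rw [IsIdempotentElem, ← map_mul, Ideal.Quotient.eq]
  have hmem : X i * (1 - X i) ∈ boolIdeal n := Ideal.subset_span ⟨i, rfl⟩
  simpa [mul_one_sub] using (boolIdeal n).neg_mem hmem

end SqReduce

section PseudoMonomial

variable {ι R : Type*} [CommRing R]

def pseudoMonomial (e : ι → R) (σ τ : Finset ι) : R :=
  (∏ i ∈ σ, e i) * ∏ j ∈ τ, (1 - e j)

theorem Finset.prod_mul_prod_of_isIdempotentElem {M : Type*} [CommMonoid M] [DecidableEq ι]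
    {e : ι → M} (he : ∀ i, IsIdempotentElem (e i)) (s t : Finset ι) :
    (∏ i ∈ s, e i) * ∏ i ∈ t, e i = ∏ i ∈ s ∪ t, e i := by
  induction s using Finset.induction_on with
  | empty => rw [Finset.prod_empty, one_mul, Finset.empty_union]
  | @insert a s ha ih =>
    rw [Finset.prod_insert ha, mul_assoc, ih, Finset.insert_union]
    by_cases has : a ∈ s ∪ t
    · rw [Finset.insert_eq_of_mem has, ← Finset.mul_prod_erase _ _ has, ← mul_assoc, he a]
    · rw [Finset.prod_insert has]

theorem pseudoMonomial_mul [DecidableEq ι] {e : ι → R} (he : ∀ i, IsIdempotentElem (e i))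
    (σ₁ τ₁ σ₂ τ₂ : Finset ι) :
    pseudoMonomial e σ₁ τ₁ * pseudoMonomial e σ₂ τ₂ = pseudoMonomial e (σ₁ ∪ σ₂) (τ₁ ∪ τ₂) := by
  rw [pseudoMonomial, pseudoMonomial, pseudoMonomial, mul_mul_mul_comm,
    Finset.prod_mul_prod_of_isIdempotentElem he,
    Finset.prod_mul_prod_of_isIdempotentElem fun i => (he i).one_sub]

theorem pseudoMonomial_eq_zero {e : ι → R} (he : ∀ i, IsIdempotentElem (e i))
    {σ τ : Finset ι} (h : ¬ Disjoint σ τ) : pseudoMonomial e σ τ = 0 := by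
  obtain ⟨i, hσ, hτ⟩ := Finset.not_disjoint_iff.mp h
  have hdvd := mul_dvd_mul (Finset.dvd_prod_of_mem e hσ)
    (Finset.dvd_prod_of_mem (fun j => 1 - e j) hτ)
  rwa [mul_comm, (he i).one_sub_mul_self, zero_dvd_iff] at hdvd

theorem pseudoMonomial_dvd_pseudoMonomial (e : ι → R) {σ τ σ' τ' : Finset ι} (hσ : σ ⊆ σ')
    (hτ : τ ⊆ τ') : pseudoMonomial e σ τ ∣ pseudoMonomial e σ' τ' :=
  mul_dvd_mul (Finset.prod_dvd_prod_of_subset _ _ _ hσ) (Finset.prod_dvd_prod_of_subset _ _ _ hτ)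

theorem map_pseudoMonomial {S : Type*} [CommRing S] (φ : R →+* S) (e : ι → R)
    (σ τ : Finset ι) : φ (pseudoMonomial e σ τ) = pseudoMonomial (fun i => φ (e i)) σ τ := by
  simp [pseudoMonomial, map_prod]

end PseudoMonomial

section PseudoMonomialPoly

variable {n : ℕ}

theorem isPseudoMonomial_iff {f : MvPolynomial (Fin n) (ZMod 2)} :
    IsPseudoMonomial n f ↔ ∃ σ τ, Disjoint σ τ ∧ f = pseudoMonomial X σ τ :=
  Iff.rfl

theorem isSquareFreePoly_pseudoMonomial {σ τ : Finset (Fin n)} (hd : Disjoint σ τ) :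
    IsSquareFreePoly n (pseudoMonomial X σ τ) := by
  intro m hm i
  have h1X (j : Fin n) : degreeOf i (1 - X j : MvPolynomial (Fin n) (ZMod 2)) ≤ degreeOf i (X j) :=
    (degreeOf_sub_le i 1 (X j)).trans (by rw [degreeOf_one, Nat.zero_max])
  calc m i ≤ degreeOf i (pseudoMonomial X σ τ) := monomial_le_degreeOf i hm
    _ ≤ ∑ j ∈ σ, degreeOf i (X j) + ∑ j ∈ τ, degreeOf i (1 - X j) :=
      (degreeOf_mul_le _ _ _).trans (add_le_add (degreeOf_prod_le _ _ _) (degreeOf_prod_le _ _ _))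
    _ ≤ ∑ j ∈ σ ∪ τ, degreeOf i (X j : MvPolynomial (Fin n) (ZMod 2)) := by
      rw [Finset.sum_union hd]
      gcongr with j
      exact h1X j
    _ ≤ 1 := by
      simp_rw [degreeOf_X]
      rw [Finset.sum_ite_eq]
      split_ifs <;> simp

theorem sqReduce_pseudoMonomial_mul (σ₁ τ₁ σ₂ τ₂ : Finset (Fin n)) :
    sqReduce n (pseudoMonomial X σ₁ τ₁ * pseudoMonomial X σ₂ τ₂) =
      sqReduce n (pseudoMonomial X (σ₁ ∪ σ₂) (τ₁ ∪ τ₂)) := by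
  apply sqReduce_eq_of_mk_eq
  rw [map_mul, map_pseudoMonomial, map_pseudoMonomial, map_pseudoMonomial,
    pseudoMonomial_mul isIdempotentElem_mk_X]

theorem sqReduce_pseudoMonomial_of_not_disjoint {σ τ : Finset (Fin n)} (h : ¬ Disjoint σ τ) :
    sqReduce n (pseudoMonomial X σ τ) = 0 := by
  rw [← sqReduce_zero (n := n)]
  apply sqReduce_eq_of_mk_eq
  rw [map_pseudoMonomial, pseudoMonomial_eq_zero isIdempotentElem_mk_X h, map_zero]

end PseudoMonomialPoly

theorem stmt10_general (n : ℕ) (f g : MvPolynomial (Fin n) (ZMod 2))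
    (hf : IsPseudoMonomial n f) (hg : IsPseudoMonomial n g) :
    sqReduce n (f * g) = 0 ∨
      (IsPseudoMonomial n (sqReduce n (f * g)) ∧
        f ∣ sqReduce n (f * g) ∧ g ∣ sqReduce n (f * g)) := by
  obtain ⟨σ₁, τ₁, -, rfl⟩ := isPseudoMonomial_iff.mp hf
  obtain ⟨σ₂, τ₂, -, rfl⟩ := isPseudoMonomial_iff.mp hg
  rw [sqReduce_pseudoMonomial_mul]
  by_cases hd : Disjoint (σ₁ ∪ σ₂) (τ₁ ∪ τ₂)
  · right
    rw [sqReduce_of_isSquareFreePoly (isSquareFreePoly_pseudoMonomial hd)]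
    exact ⟨⟨_, _, hd, rfl⟩,
      pseudoMonomial_dvd_pseudoMonomial X Finset.subset_union_left Finset.subset_union_left,
      pseudoMonomial_dvd_pseudoMonomial X Finset.subset_union_right Finset.subset_union_right⟩
  · exact Or.inl (sqReduce_pseudoMonomial_of_not_disjoint hd)

/-- the reduced product of two pseudo-monomials is `0` or a
pseudo-monomial multiple of both. -/
theorem stmt10 (n : ℕ) (hn : 1 ≤ n) (f g : MvPolynomial (Fin n) (ZMod 2))
    (hf : IsPseudoMonomial n f) (hg : IsPseudoMonomial n g) :
    sqReduce n (f * g) = 0 ∨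
      (IsPseudoMonomial n (sqReduce n (f * g)) ∧
        f ∣ sqReduce n (f * g) ∧ g ∣ sqReduce n (f * g)) :=
  stmt10_general n f g hf hg
end

section
/- Let C ⊆ {0,1}ⁿ be a neural code and h ∈ 𝔽₂[x₁,…,x_n] a pseudo-monomial. Then h ∈ J_C if and only if h(c) = 0 for every c ∈ C. -/
open MvPolynomial

lemma rho_eval_ne (n : ℕ) (v c : Fin n → ZMod 2) (hne : c ≠ v) :
    eval c (rho n v) = 0 := by
  obtain ⟨i, hi⟩ := Function.ne_iff.mp hne
  unfold rho
  rw [map_prod]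
  apply Finset.prod_eq_zero (Finset.mem_univ i)
  simp only [map_sub, map_one, eval_C, eval_X]
  have : ∀ a b : ZMod 2, b ≠ a → 1 - a - b = 0 := by decide
  exact this _ _ hi

lemma rho_indicator (n : ℕ) (A : Finset (Fin n)) :
    rho n (fun i => if i ∈ A then 1 else 0) =
      (∏ i ∈ A, X i) * ∏ j ∈ Aᶜ, (1 - X j) := by
  unfold rho
  rw [← Finset.prod_mul_prod_compl A]
  congr 1
  · exact Finset.prod_congr rfl fun i hi => by
      simp [hi, CharTwo.neg_eq]
  · exact Finset.prod_congr rfl fun i hi => by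
      simp [Finset.mem_compl.mp hi]

/-- a pseudo-monomial lies in `J_C` iff it vanishes on `C`. -/
theorem stmt13 (n : ℕ) (hn : 1 ≤ n) (Co : Set (Fin n → ZMod 2))
    (h : MvPolynomial (Fin n) (ZMod 2)) (hpm : IsPseudoMonomial n h) :
    h ∈ neuralIdeal n Co ↔ ∀ c ∈ Co, eval c h = 0 := by
  constructor
  · intro hmem c hc
    have hle : neuralIdeal n Co ≤ RingHom.ker (eval c) := by
      rw [neuralIdeal, Ideal.span_le]
      rintro p ⟨v, hv, rfl⟩
      exact rho_eval_ne n v c (fun hcv => hv (hcv ▸ hc))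
    exact hle hmem
  · intro hvan
    obtain ⟨σ, τ, hdisj, rfl⟩ := hpm
    set s : Finset (Fin n) := (σ ∪ τ)ᶜ with hs
    have hσs : ∀ t ∈ s.powerset, Disjoint σ t := by
      intro t ht
      refine Finset.disjoint_left.mpr fun a ha hat => ?_
      have := Finset.mem_powerset.mp ht hat
      simp [hs, Finset.mem_compl, ha] at this
    have key : (∏ i ∈ σ, X i) * ∏ j ∈ τ, (1 - X j) =
        ∑ t ∈ s.powerset, (∏ i ∈ σ ∪ t, X i) *
          ∏ j ∈ (σ ∪ t)ᶜ, (1 - (X j : MvPolynomial (Fin n) (ZMod 2))) := by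
      have hone : (∏ k ∈ s, ((X k : MvPolynomial (Fin n) (ZMod 2)) + (1 - X k))) = 1 := by
        have hfac : ∀ k ∈ s, ((X k : MvPolynomial (Fin n) (ZMod 2)) + (1 - X k)) = 1 :=
          fun k _ => by ring
        rw [Finset.prod_congr rfl hfac, Finset.prod_const_one]
      calc (∏ i ∈ σ, X i) * ∏ j ∈ τ, (1 - X j)
          = ((∏ i ∈ σ, X i) * ∏ j ∈ τ, (1 - X j)) *
            ∏ k ∈ s, ((X k : MvPolynomial (Fin n) (ZMod 2)) + (1 - X k)) := by
            rw [hone, mul_one]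
        _ = ∑ t ∈ s.powerset, (∏ i ∈ σ ∪ t, X i) *
            ∏ j ∈ (σ ∪ t)ᶜ, (1 - X j) := by
            rw [Finset.prod_add, Finset.mul_sum]
            refine Finset.sum_congr rfl fun t ht => ?_
            have htσ : Disjoint σ t := hσs t ht
            have hcompl : (σ ∪ t)ᶜ = τ ∪ (s \ t) := by
              have hts := Finset.mem_powerset.mp ht
              ext a
              simp only [Finset.mem_compl, Finset.mem_union, Finset.mem_sdiff, hs]
              constructor
              · intro ha
                push_neg at ha
                by_cases haτ : a ∈ τ
                · exact Or.inl haτ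
                · exact Or.inr ⟨by simp [Finset.mem_compl, ha.1, haτ], ha.2⟩
              · rintro (haτ | ⟨has, hat⟩)
                · push_neg
                  refine ⟨fun haσ => Finset.disjoint_left.mp hdisj haσ haτ, fun hat => ?_⟩
                  have h1 := Finset.mem_compl.mp (hs ▸ hts hat)
                  exact h1 (Finset.mem_union_right σ haτ)
                · push_neg
                  exact ⟨fun haσ => has (Or.inl haσ), hat⟩
            have hτd : Disjoint τ (s \ t) := by
              refine Finset.disjoint_left.mpr fun a ha hasd => ?_
              have := (Finset.mem_sdiff.mp hasd).1
              simp [hs, Finset.mem_compl, ha] at this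
            rw [hcompl, Finset.prod_union htσ, Finset.prod_union hτd]
            ring
    rw [key]
    apply Ideal.sum_mem
    intro t ht
    set v : Fin n → ZMod 2 := fun i => if i ∈ σ ∪ t then 1 else 0 with hv
    have heq : (∏ i ∈ σ ∪ t, (X i : MvPolynomial (Fin n) (ZMod 2))) *
        ∏ j ∈ (σ ∪ t)ᶜ, (1 - X j) = rho n v := (rho_indicator n (σ ∪ t)).symm
    rw [heq]
    apply Ideal.subset_span
    refine ⟨v, fun hvCo => ?_, rfl⟩
    have := hvan v hvCo
    have hev : eval v ((∏ i ∈ σ, X i) * ∏ j ∈ τ, (1 - X j)) = 1 := by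
      rw [map_mul, map_prod, map_prod]
      have h1 : ∀ i ∈ σ, eval v (X i : MvPolynomial (Fin n) (ZMod 2)) = 1 := by
        intro i hi
        simp [hv, Finset.mem_union, hi]
      have h2 : ∀ j ∈ τ, eval v (1 - (X j : MvPolynomial (Fin n) (ZMod 2))) = 1 := by
        intro j hj
        have hjσ : j ∉ σ := fun hjσ => Finset.disjoint_left.mp hdisj hjσ hj
        have hjt : j ∉ t := by
          intro hjt
          have := Finset.mem_powerset.mp ht hjt
          simp [hs, Finset.mem_compl, hj] at this
        simp [hv, Finset.mem_union, hjσ, hjt]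
      rw [Finset.prod_congr rfl h1, Finset.prod_congr rfl h2]
      simp
    rw [hev] at this
    exact one_ne_zero this
end

section
/- Let J ⊆ 𝔽₂[x₁,…,x_n] be a pseudo-monomial ideal and h ∈ J a pseudo-monomial. Then there exists a minimal pseudo-monomial f ∈ CF(J) and a polynomial h₁ such that h = h₁·f; that is, every pseudo-monomial in J is a polynomial multiple of some element of the canonical form of J. -/
open MvPolynomial

lemma stmt14_aux (n : ℕ) (J : Ideal (MvPolynomial (Fin n) (ZMod 2))) :
    ∀ d (h : MvPolynomial (Fin n) (ZMod 2)), h.totalDegree = d →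
      IsPseudoMonomial n h → h ∈ J →
      ∃ f ∈ CF n J, ∃ h₁ : MvPolynomial (Fin n) (ZMod 2), h = h₁ * f := by
  intro d
  induction d using Nat.strong_induction_on with
  | _ d IH =>
    intro h hd hpm hmem
    by_cases hmin : IsMinimalPM n J h
    · exact ⟨h, hmin, 1, (one_mul h).symm⟩
    · have hex : ∃ g, IsPseudoMonomial n g ∧ g ∈ J ∧ g.totalDegree < h.totalDegree ∧
          ∃ h', h = g * h' := by
        by_contra hc
        exact hmin ⟨hmem, hpm, by push_neg at hc ⊢; tauto⟩
      obtain ⟨g, hgpm, hgJ, hglt, h', heq⟩ := hex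
      obtain ⟨f, hf, g₁, hg₁⟩ := IH g.totalDegree (hd ▸ hglt) g rfl hgpm hgJ
      exact ⟨f, hf, h' * g₁, by rw [heq, hg₁]; ring⟩

/-- every pseudo-monomial in a pseudo-monomial ideal is a
polynomial multiple of an element of its canonical form. -/
theorem stmt14 (n : ℕ) (hn : 1 ≤ n) (J : Ideal (MvPolynomial (Fin n) (ZMod 2)))
    (hJ : IsPseudoMonomialIdeal n J) (h : MvPolynomial (Fin n) (ZMod 2))
    (hpm : IsPseudoMonomial n h) (hmem : h ∈ J) :
    ∃ f ∈ CF n J, ∃ h₁ : MvPolynomial (Fin n) (ZMod 2), h = h₁ * f := by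
  exact stmt14_aux n J h.totalDegree h rfl hpm hmem
end

section
/- Let J ⊆ 𝔽₂[x₁,…,x_n] be a pseudo-monomial ideal. Then J is generated by its canonical form: J = ⟨CF(J)⟩. -/
open MvPolynomial

/-- a pseudo-monomial ideal is generated by its canonical form. -/
theorem stmt15 (n : ℕ) (hn : 1 ≤ n) (J : Ideal (MvPolynomial (Fin n) (ZMod 2)))
    (hJ : IsPseudoMonomialIdeal n J) :
    J = Ideal.span (CF n J) := by
  obtain ⟨S, hSpm, hSspan⟩ := hJ
  have key : ∀ d : ℕ, ∀ f : MvPolynomial (Fin n) (ZMod 2), f.totalDegree ≤ d →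
      IsPseudoMonomial n f → f ∈ J → f ∈ Ideal.span (CF n J) := by
    intro d
    induction d with
    | zero =>
      intro f hdeg hpm hfJ
      apply Ideal.subset_span
      refine ⟨hfJ, hpm, ?_⟩
      rintro ⟨g, _, _, hlt, _⟩
      omega
    | succ d ih =>
      intro f hdeg hpm hfJ
      by_cases hmin : IsMinimalPM n J f
      · exact Ideal.subset_span hmin
      · have : ∃ g, IsPseudoMonomial n g ∧ g ∈ J ∧ g.totalDegree < f.totalDegree ∧
            ∃ h, f = g * h := by
          by_contra hc
          exact hmin ⟨hfJ, hpm, hc⟩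
        obtain ⟨g, hgpm, hgJ, hglt, h, rfl⟩ := this
        exact Ideal.mul_mem_right h _ (ih g (by omega) hgpm hgJ)
  apply le_antisymm
  · nth_rewrite 1 [hSspan]
    apply Ideal.span_le.mpr
    intro f hf
    exact key f.totalDegree f le_rfl (hSpm f hf) (hSspan ▸ Ideal.subset_span hf)
  · apply Ideal.span_le.mpr
    intro f hf
    exact hf.1
end

section
/- Let C ⊆ {0,1}ⁿ be a neural code, c ∈ {0,1}ⁿ, and let f, g ∈ CF(J_C) be distinct elements with f(c) = 1 and g(c) = 1. Then for all indices i, j with 1 ≤ i, j ≤ n and every pseudo-monomial h, we have f·(x_i − c_i) ≠ h·g·(x_j − c_j); that is, no product f·(x_i − c_i) is a polynomial multiple of a product g·(x_j − c_j) arising from a different element of CF(J_C). -/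
/-!
Since `f(c) = 1`, the prime `x_j - c_j` does not divide `f`, so it divides `x_i - c_i`, which
forces `i = j`. Cancelling leaves `f = h g`; if `h ≠ 1` then `g ∈ J_C` is a pseudo-monomial
of smaller degree dividing `f`, contradicting the minimality of `f`, so `f = g`.
-/

open MvPolynomial

namespace MvPolynomial

variable {σ R : Type*} [CommRing R]

theorem prime_X_sub_C [IsDomain R] [DecidableEq σ] (i : σ) (a : R) :
    Prime (X i - C a : MvPolynomial σ R) := by
  let e := (renameEquiv R (Equiv.optionSubtypeNe i).symm).trans
    (optionEquivLeft R {k // k ≠ i})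
  have he : e (X i - C a) = Polynomial.X - Polynomial.C (C a) := by
    simp [e, optionEquivLeft_X_none, optionEquivLeft_C]
  rw [← e.symm_apply_apply (X i - C a), he]
  exact (MulEquiv.prime_iff e.symm.toMulEquiv).mpr (Polynomial.prime_X_sub_C _)

theorem not_X_sub_C_dvd_of_eval_ne_zero {p : MvPolynomial σ R} {c : σ → R} (hp : eval c p ≠ 0)
    (j : σ) : ¬ X j - C (c j) ∣ p := by
  rintro ⟨q, rfl⟩
  simp at hp

theorem eq_of_X_sub_C_dvd_X_sub_C [Nontrivial R] [DecidableEq σ] {i j : σ} {a b : R}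
    (h : (X j - C a : MvPolynomial σ R) ∣ X i - C b) : i = j := by
  by_contra hij
  obtain ⟨q, hq⟩ := h
  -- at this point the divisor vanishes while `X i - C b` evaluates to `1`
  have := congrArg (eval (Function.update (fun _ => a) i (b + 1))) hq
  simp [Function.update_of_ne (Ne.symm hij)] at this

end MvPolynomial

namespace IsPseudoMonomial

variable {n : ℕ} {h : MvPolynomial (Fin n) (ZMod 2)}

theorem exists_eval_eq_one (hh : IsPseudoMonomial n h) : ∃ v, eval v h = 1 := by
  obtain ⟨σ, τ, hdisj, rfl⟩ := hh
  refine ⟨fun k => if k ∈ σ then 1 else 0, ?_⟩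
  rw [map_mul, map_prod, map_prod, Finset.prod_eq_one, Finset.prod_eq_one, one_mul]
  · intro j hj
    simp [Finset.disjoint_right.mp hdisj hj]
  · intro i hi
    simp [hi]

theorem ne_zero (hh : IsPseudoMonomial n h) : h ≠ 0 := by
  rintro rfl
  simpa using hh.exists_eval_eq_one

theorem eq_one_of_totalDegree_eq_zero (hh : IsPseudoMonomial n h) (hd : h.totalDegree = 0) :
    h = 1 := by
  rw [totalDegree_eq_zero_iff_eq_C] at hd
  obtain ⟨v, hv⟩ := hh.exists_eval_eq_one
  rw [hd, eval_C] at hv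
  rw [hd, hv, map_one]

end IsPseudoMonomial

theorem IsMinimalPM.eq_of_eq_mul {n : ℕ} {J : Ideal (MvPolynomial (Fin n) (ZMod 2))}
    {f g h : MvPolynomial (Fin n) (ZMod 2)} (hf : IsMinimalPM n J f) (hg : IsMinimalPM n J g)
    (hh : IsPseudoMonomial n h) (hfg : f = h * g) : f = g := by
  by_cases hd : h.totalDegree = 0
  · rw [hfg, hh.eq_one_of_totalDegree_eq_zero hd, one_mul]
  refine absurd ⟨g, hg.2.1, hg.1, ?_, h, by rw [hfg, mul_comm]⟩ hf.2.2
  rw [hfg, totalDegree_mul_of_isDomain hh.ne_zero hg.2.1.ne_zero]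
  omega

theorem stmt18_general (n : ℕ) (Co : Set (Fin n → ZMod 2)) (c : Fin n → ZMod 2)
    (f g : MvPolynomial (Fin n) (ZMod 2))
    (hf : f ∈ CF n (neuralIdeal n Co)) (hg : g ∈ CF n (neuralIdeal n Co))
    (hne : f ≠ g) (hfc : eval c f = 1) :
    ∀ i j : Fin n, ∀ h : MvPolynomial (Fin n) (ZMod 2), IsPseudoMonomial n h →
      f * (X i - C (c i)) ≠ h * g * (X j - C (c j)) := by
  intro i j h hh heq
  have hf_not_dvd : ¬ X j - C (c j) ∣ f :=
    not_X_sub_C_dvd_of_eval_ne_zero (by simp [hfc]) j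
  have hdvd : X j - C (c j) ∣ X i - C (c i) :=
    ((prime_X_sub_C j (c j)).dvd_or_dvd ⟨h * g, by rw [heq, mul_comm]⟩).resolve_left hf_not_dvd
  obtain rfl := eq_of_X_sub_C_dvd_X_sub_C hdvd
  exact hne (hf.eq_of_eq_mul hg hh (mul_right_cancel₀ (prime_X_sub_C i (c i)).ne_zero heq))

/-- no element of `N` is a multiple of another element of `N`. -/
theorem stmt18 (n : ℕ) (hn : 1 ≤ n) (Co : Set (Fin n → ZMod 2)) (c : Fin n → ZMod 2)
    (f g : MvPolynomial (Fin n) (ZMod 2))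
    (hf : f ∈ CF n (neuralIdeal n Co)) (hg : g ∈ CF n (neuralIdeal n Co))
    (hne : f ≠ g) (hfc : eval c f = 1) (hgc : eval c g = 1) :
    ∀ i j : Fin n, ∀ h : MvPolynomial (Fin n) (ZMod 2), IsPseudoMonomial n h →
      f * (X i - C (c i)) ≠ h * g * (X j - C (c j)) :=
  stmt18_general n Co c f g hf hg hne hfc
end
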